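/- Let n ≥ 3 and let f = (f_0, …, f_n) be given by f_k = a_0^{n−k} b_0^k + a_1^{n−k} b_1^k, where v_0 = (a_0, b_0) and v_1 = (a_1, b_1) are linearly independent vectors in ℂ². If f ∈ 𝒜₃, then 2(a_0 a_1 + b_0 b_1)² = −(a_1 b_0 − a_0 b_1)² (i.e., θ(v_0, v_1) = −1/2). -/

import Mathlib

/-!
Both `v₀^{⊗n} + v₁^{⊗n}` and `c (u^{⊗n} + i^r w^{⊗n})`, with `u = H(1, α)` and `w = H(1, -α)`,
are decompositions of `f` into two tensor powers of non-parallel vectors. For `n ≥ 3` any four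
pairwise non-parallel tensor powers are linearly independent, so the decomposition is unique up
to scaling: `{u, w}` is `{v₀, v₁}` up to order and scalar factors. The quantity
`2 (x·y)² + (det(x, y))²` is multiplied by a square under scaling and is invariant under `O₂`,
and for `(1, α), (1, -α)` it equals `2 (1 - i)² + 4i = 0`.
-/

/-- `α = (1 + i)/√2`, a primitive 8th root of unity with `α² = i`. -/
noncomputable def alpha : ℂ := (1 + Complex.I) / (Real.sqrt 2 : ℂ)

/-- `f ∈ 𝒜₃`: there exist `H ∈ O₂(ℂ)`, a nonzero `c ∈ ℂ`, and `r ∈ {0,1,2,3}` such that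
`f = c ((H(1,α))^{⊗n} + i^r (H(1,-α))^{⊗n})`. -/
def MemA3 (n : ℕ) (f : ℕ → ℂ) : Prop :=
  ∃ (H : Matrix (Fin 2) (Fin 2) ℂ) (c : ℂ) (r : ℕ),
    H.transpose * H = 1 ∧ c ≠ 0 ∧ r ≤ 3 ∧
    ∀ k ≤ n, f k =
      c * (H.mulVec ![1, alpha] 0 ^ (n - k) * H.mulVec ![1, alpha] 1 ^ k +
        Complex.I ^ r *
          (H.mulVec ![1, -alpha] 0 ^ (n - k) * H.mulVec ![1, -alpha] 1 ^ k))

open Matrix Finset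

section Orthogonal

variable {R : Type*} [CommRing R]

lemma Matrix.det_sq_eq_one_of_transpose_mul_self {m : Type*} [Fintype m] [DecidableEq m]
    {H : Matrix m m R} (hH : Hᵀ * H = 1) : H.det ^ 2 = 1 := by
  simpa [det_mul, sq] using congrArg det hH

lemma Matrix.dotProduct_mulVec_mulVec_of_transpose_mul_self {m : Type*} [Fintype m]
    [DecidableEq m] {H : Matrix m m R} (hH : Hᵀ * H = 1) (x y : m → R) :
    (H *ᵥ x) ⬝ᵥ (H *ᵥ y) = x ⬝ᵥ y := by
  rw [dotProduct_mulVec, ← vecMul_transpose, vecMul_vecMul, hH, vecMul_one]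

end Orthogonal

section Plane

variable {K : Type*} [Field K]

def cross (x y : Fin 2 → K) : K := x 0 * y 1 - x 1 * y 0

/-- The entries of the symmetric signature `v^{⊗n}`. -/
def tensorPow (n : ℕ) (v : Fin 2 → K) (k : ℕ) : K := v 0 ^ (n - k) * v 1 ^ k

/-- For `cross x y ≠ 0`, `θ(x, y) = -1/2` holds iff `thetaForm x y = 0`. -/
def thetaForm (x y : Fin 2 → K) : K := 2 * (x ⬝ᵥ y) ^ 2 + cross x y ^ 2

lemma cross_smul_smul (l m : K) (x y : Fin 2 → K) :
    cross (l • x) (m • y) = l * m * cross x y := by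
  simp only [cross, Pi.smul_apply, smul_eq_mul]
  ring

lemma ne_zero_left_of_cross_ne_zero {x y : Fin 2 → K} (h : cross x y ≠ 0) : x ≠ 0 := by
  rintro rfl
  simp [cross] at h

lemma ne_zero_right_of_cross_ne_zero {x y : Fin 2 → K} (h : cross x y ≠ 0) : y ≠ 0 := by
  rintro rfl
  simp [cross] at h

lemma cross_eq_zero_of_cross_eq_zero {x y z : Fin 2 → K} (hz : z ≠ 0)
    (hxz : cross x z = 0) (hyz : cross y z = 0) : cross x y = 0 := by
  have h₀ : z 0 * cross x y = 0 := by
    unfold cross at *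
    linear_combination (y 0) * hxz - (x 0) * hyz
  have h₁ : z 1 * cross x y = 0 := by
    unfold cross at *
    linear_combination (y 1) * hxz - (x 1) * hyz
  by_contra hxy
  refine hz (funext fun i => ?_)
  fin_cases i
  exacts [(mul_eq_zero.mp h₀).resolve_right hxy, (mul_eq_zero.mp h₁).resolve_right hxy]

lemma exists_smul_eq_of_cross_eq_zero {x y : Fin 2 → K} (hx : x ≠ 0) (h : cross x y = 0) :
    ∃ l : K, y = l • x := by
  unfold cross at h
  by_cases hx0 : x 0 = 0
  · have hx1 : x 1 ≠ 0 := fun hx1 => hx (by ext i; fin_cases i <;> assumption)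
    refine ⟨y 1 / x 1, ?_⟩
    ext i
    fin_cases i
    · simp only [Pi.smul_apply, smul_eq_mul]
      simpa [hx0, hx1] using h
    · simp [hx1]
  · refine ⟨y 0 / x 0, ?_⟩
    ext i
    fin_cases i
    · simp [hx0]
    · simp only [Fin.mk_one, Fin.isValue, Pi.smul_apply, smul_eq_mul]
      field_simp
      linear_combination h

lemma cross_ne_zero_of_linearIndependent {a₀ b₀ a₁ b₁ : K}
    (h : LinearIndependent K ![(a₀, b₀), (a₁, b₁)]) : cross ![a₀, b₀] ![a₁, b₁] ≠ 0 := by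
  intro hc
  simp only [cross, cons_val_zero, cons_val_one] at hc
  have hb : b₁ • (a₀, b₀) + (-b₀) • (a₁, b₁) = 0 := by
    simp only [Prod.smul_mk, Prod.mk_add_mk, smul_eq_mul, Prod.mk_eq_zero]
    exact ⟨by linear_combination hc, by ring⟩
  have ha : a₁ • (a₀, b₀) + (-a₀) • (a₁, b₁) = 0 := by
    simp only [Prod.smul_mk, Prod.mk_add_mk, smul_eq_mul, Prod.mk_eq_zero]
    exact ⟨by ring, by linear_combination -hc⟩
  obtain ⟨hb₁, hb₀⟩ := LinearIndependent.pair_iff.mp h _ _ hb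
  obtain ⟨ha₁, ha₀⟩ := LinearIndependent.pair_iff.mp h _ _ ha
  exact h.ne_zero 0 (by simp_all)

lemma thetaForm_comm (x y : Fin 2 → K) : thetaForm y x = thetaForm x y := by
  simp only [thetaForm, cross, dotProduct_comm]
  ring

lemma thetaForm_smul_smul (l m : K) (x y : Fin 2 → K) :
    thetaForm (l • x) (m • y) = (l * m) ^ 2 * thetaForm x y := by
  simp only [thetaForm, cross_smul_smul, dotProduct_smul, smul_dotProduct, smul_eq_mul]
  ring

lemma thetaForm_eq_zero_of_smul_smul {l m : K} {x y : Fin 2 → K}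
    (hc : cross (l • x) (m • y) ≠ 0) (hθ : thetaForm (l • x) (m • y) = 0) :
    thetaForm x y = 0 := by
  rw [cross_smul_smul] at hc
  rw [thetaForm_smul_smul] at hθ
  exact (mul_eq_zero.mp hθ).resolve_left (pow_ne_zero 2 (left_ne_zero_of_mul hc))

lemma cross_mulVec (H : Matrix (Fin 2) (Fin 2) K) (x y : Fin 2 → K) :
    cross (H *ᵥ x) (H *ᵥ y) = H.det * cross x y := by
  simp only [cross, mulVec, dotProduct, Fin.sum_univ_two, det_fin_two]
  ring

lemma thetaForm_mulVec {H : Matrix (Fin 2) (Fin 2) K} (hH : Hᵀ * H = 1) (x y : Fin 2 → K) :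
    thetaForm (H *ᵥ x) (H *ᵥ y) = thetaForm x y := by
  rw [thetaForm, thetaForm, dotProduct_mulVec_mulVec_of_transpose_mul_self hH, cross_mulVec,
    mul_pow, det_sq_eq_one_of_transpose_mul_self hH, one_mul]

lemma tensorPow_differencing (n : ℕ) (v w : Fin 2 → K) {k : ℕ} (hk : k ≤ n) :
    w 1 * tensorPow (n + 1) v k - w 0 * tensorPow (n + 1) v (k + 1) =
      cross v w * tensorPow n v k := by
  rw [tensorPow, tensorPow, tensorPow, Nat.add_sub_add_right, Nat.sub_add_comm hk, pow_succ,
    pow_succ, cross]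
  ring

lemma eq_zero_of_forall_mul_tensorPow_eq_zero {n : ℕ} {v : Fin 2 → K} {c : K} (hv : v ≠ 0)
    (h : ∀ k ≤ n, c * tensorPow n v k = 0) : c = 0 := by
  by_cases hv0 : v 0 = 0
  · have hv1 : v 1 ≠ 0 := fun hv1 => hv (by ext i; fin_cases i <;> assumption)
    simpa [tensorPow, hv1] using h n le_rfl
  · simpa [tensorPow, hv0] using h 0 (Nat.zero_le n)

/-- Differencing against `v i` kills the term of `v i` and multiplies that of `v j` by
`cross (v j) (v i) ≠ 0`, lowering both `n` and the number of terms by one. -/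
theorem coeff_eq_zero_of_sum_tensorPow_eq_zero {ι : Type*} [DecidableEq ι] {n : ℕ}
    {s : Finset ι} {v : ι → Fin 2 → K} {c : ι → K} {j : ι} (hj : j ∈ s) (hvj : v j ≠ 0)
    (hcross : ∀ i ∈ s, i ≠ j → cross (v j) (v i) ≠ 0) (hcard : #s ≤ n + 1)
    (h : ∀ k ≤ n, ∑ i ∈ s, c i * tensorPow n (v i) k = 0) : c j = 0 := by
  induction n generalizing s c with
  | zero =>
    have hs : ∀ i ∈ s, i ≠ j → c i * tensorPow 0 (v i) 0 = 0 := fun i hi hij =>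
      absurd (card_le_one.mp hcard i hi j hj) hij
    have h₀ := h 0 le_rfl
    rw [sum_eq_single_of_mem j hj hs] at h₀
    simpa [tensorPow] using h₀
  | succ n ih =>
    by_cases hs : ∃ i ∈ s, i ≠ j
    · obtain ⟨i, hi, hij⟩ := hs
      have hdiff : ∀ k ≤ n, ∑ l ∈ s.erase i,
          c l * cross (v l) (v i) * tensorPow n (v l) k = 0 := by
        intro k hk
        rw [sum_erase _ (by simp [cross, mul_comm])]
        calc ∑ l ∈ s, c l * cross (v l) (v i) * tensorPow n (v l) k
            = ∑ l ∈ s, (v i 1 * (c l * tensorPow (n + 1) (v l) k)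
                - v i 0 * (c l * tensorPow (n + 1) (v l) (k + 1))) :=
              sum_congr rfl fun l _ => by rw [mul_assoc, ← tensorPow_differencing n _ _ hk]; ring
          _ = v i 1 * ∑ l ∈ s, c l * tensorPow (n + 1) (v l) k
              - v i 0 * ∑ l ∈ s, c l * tensorPow (n + 1) (v l) (k + 1) := by
              rw [sum_sub_distrib, mul_sum, mul_sum]
          _ = 0 := by rw [h k (by omega), h (k + 1) (by omega)]; ring
      have hcj := ih (mem_erase.mpr ⟨hij.symm, hj⟩)
        (fun l hl hlj => hcross l (mem_of_mem_erase hl) hlj)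
        (by rw [card_erase_of_mem hi]; omega) hdiff
      exact (mul_eq_zero.mp hcj).resolve_right (hcross i hi hij)
    · push Not at hs
      refine eq_zero_of_forall_mul_tensorPow_eq_zero (n := n + 1) hvj fun k hk => ?_
      rw [← h k hk, sum_eq_single_of_mem j hj fun i hi hij => absurd (hs i hi) hij]

lemma cross_eq_zero_or_of_tensorPow_add_eq {n : ℕ} (hn : 3 ≤ n) {v₀ v₁ u w : Fin 2 → K}
    {c d : K} (hv : cross v₀ v₁ ≠ 0)
    (h : ∀ k ≤ n, tensorPow n v₀ k + tensorPow n v₁ k =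
      c * tensorPow n u k + d * tensorPow n w k) :
    cross v₀ u = 0 ∨ cross v₀ w = 0 := by
  by_contra! huw
  have := coeff_eq_zero_of_sum_tensorPow_eq_zero (n := n) (s := univ) (v := ![v₀, v₁, u, w])
    (c := ![1, 1, -c, -d]) (j := 0) (mem_univ _) (ne_zero_left_of_cross_ne_zero hv)
    (by intro i _ hi; fin_cases i <;> simp_all) (by rw [card_univ, Fintype.card_fin]; omega)
    (fun k hk => by
      simp only [Fin.sum_univ_four, cons_val_zero, cons_val_one, Matrix.cons_val, one_mul]
      linear_combination h k hk)
  simp at this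

lemma cross_pairing_of_tensorPow_add_eq {n : ℕ} (hn : 3 ≤ n) {v₀ v₁ u w : Fin 2 → K}
    {c d : K} (hv : cross v₀ v₁ ≠ 0) (huw : cross u w ≠ 0)
    (h : ∀ k ≤ n, tensorPow n v₀ k + tensorPow n v₁ k =
      c * tensorPow n u k + d * tensorPow n w k) :
    (cross v₀ u = 0 ∧ cross v₁ w = 0) ∨ (cross v₀ w = 0 ∧ cross v₁ u = 0) := by
  have hv' : cross v₁ v₀ ≠ 0 := by rw [cross] at hv ⊢; contrapose! hv; linear_combination -hv
  rcases cross_eq_zero_or_of_tensorPow_add_eq hn hv h with h₀ | h₀ <;>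
  rcases cross_eq_zero_or_of_tensorPow_add_eq hn hv'
    (fun k hk => (add_comm _ _).trans (h k hk)) with h₁ | h₁
  · exact absurd (cross_eq_zero_of_cross_eq_zero (ne_zero_left_of_cross_ne_zero huw) h₀ h₁) hv
  · exact Or.inl ⟨h₀, h₁⟩
  · exact Or.inr ⟨h₀, h₁⟩
  · exact absurd (cross_eq_zero_of_cross_eq_zero (ne_zero_right_of_cross_ne_zero huw) h₀ h₁) hv

theorem thetaForm_eq_zero_of_tensorPow_add_eq {n : ℕ} (hn : 3 ≤ n) {v₀ v₁ u w : Fin 2 → K}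
    {c d : K} (hv : cross v₀ v₁ ≠ 0) (huw : cross u w ≠ 0)
    (h : ∀ k ≤ n, tensorPow n v₀ k + tensorPow n v₁ k =
      c * tensorPow n u k + d * tensorPow n w k)
    (hθ : thetaForm u w = 0) : thetaForm v₀ v₁ = 0 := by
  have hv₀ := ne_zero_left_of_cross_ne_zero hv
  have hv₁ := ne_zero_right_of_cross_ne_zero hv
  rcases cross_pairing_of_tensorPow_add_eq hn hv huw h with ⟨hu, hw⟩ | ⟨hw, hu⟩
  · obtain ⟨l, rfl⟩ := exists_smul_eq_of_cross_eq_zero hv₀ hu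
    obtain ⟨m, rfl⟩ := exists_smul_eq_of_cross_eq_zero hv₁ hw
    exact thetaForm_eq_zero_of_smul_smul huw hθ
  · obtain ⟨l, rfl⟩ := exists_smul_eq_of_cross_eq_zero hv₁ hu
    obtain ⟨m, rfl⟩ := exists_smul_eq_of_cross_eq_zero hv₀ hw
    rw [← thetaForm_comm]
    exact thetaForm_eq_zero_of_smul_smul huw hθ

end Plane

lemma alpha_sq : alpha ^ 2 = Complex.I := by
  have h2 : ((Real.sqrt 2 : ℝ) : ℂ) ^ 2 = 2 := by
    norm_cast
    exact Real.sq_sqrt (by norm_num)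
  rw [alpha, div_pow, h2]
  linear_combination (1 / 2 : ℂ) * Complex.I_sq

lemma cross_one_alpha : cross ![1, alpha] ![1, -alpha] = -2 * alpha := by
  simp only [cross, cons_val_zero, cons_val_one]
  ring

lemma thetaForm_one_alpha : thetaForm ![1, alpha] ![1, -alpha] = 0 := by
  simp only [thetaForm, cross_one_alpha, dotProduct, Fin.sum_univ_two, cons_val_zero,
    cons_val_one]
  linear_combination 2 * (alpha ^ 2 + Complex.I) * alpha_sq + 2 * Complex.I_sq

/-- If `f = v₀^{⊗n} + v₁^{⊗n}` with `v₀ = (a₀, b₀)`, `v₁ = (a₁, b₁)` linearly independent,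
`n ≥ 3`, and `f ∈ 𝒜₃`, then `2 (a₀ a₁ + b₀ b₁)² = −(a₁ b₀ − a₀ b₁)²`, i.e.
`θ(v₀, v₁) = −1/2`. -/
theorem stmt_9 (n : ℕ) (hn : 3 ≤ n) (a₀ b₀ a₁ b₁ : ℂ)
    (hli : LinearIndependent ℂ ![(a₀, b₀), (a₁, b₁)]) (f : ℕ → ℂ)
    (hf : ∀ k ≤ n, f k = a₀ ^ (n - k) * b₀ ^ k + a₁ ^ (n - k) * b₁ ^ k)
    (hmem : MemA3 n f) :
    2 * (a₀ * a₁ + b₀ * b₁) ^ 2 = -(a₁ * b₀ - a₀ * b₁) ^ 2 := by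
  obtain ⟨H, c, r, hH, -, -, hfc⟩ := hmem
  have hdet : H.det ≠ 0 := fun h0 => by
    simpa [h0] using det_sq_eq_one_of_transpose_mul_self hH
  have hα : alpha ≠ 0 := fun h0 => Complex.I_ne_zero (by rw [← alpha_sq, h0, sq, zero_mul])
  have huw : cross (H *ᵥ ![1, alpha]) (H *ᵥ ![1, -alpha]) ≠ 0 := by
    rw [cross_mulVec, cross_one_alpha]
    exact mul_ne_zero hdet (mul_ne_zero (by norm_num) hα)
  have hθ := thetaForm_eq_zero_of_tensorPow_add_eq hn
    (cross_ne_zero_of_linearIndependent hli) huw (c := c) (d := c * Complex.I ^ r)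
    (fun k hk => (hf k hk).symm.trans ((hfc k hk).trans (by simp only [tensorPow]; ring)))
    ((thetaForm_mulVec hH _ _).trans thetaForm_one_alpha)
  simp only [thetaForm, cross, dotProduct, Fin.sum_univ_two, cons_val_zero,
    cons_val_one] at hθ
  linear_combination hθ
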